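/- Let n ≥ 1 and let S_n(Sym_n) be the monoid presented by generators x_1,…,x_n and relations x_{σ(1)}x_{σ(2)}⋯x_{σ(n)} = x_1x_2⋯x_n for all σ ∈ Sym_n. Then the map from ℕ^n to S_n(Sym_n) sending (m_1,…,m_n) to the element x_1^{m_1}·x_ε·x_2^{m_2}⋯x_n^{m_n}, where x_ε = x_1x_2⋯x_n, is injective. -/

import Mathlib

/-- The word `x_{σ(1)} x_{σ(2)} ⋯ x_{σ(n)}` in the free monoid on `n` generators
(generator `x_j` is indexed by `j-1 : Fin n`). -/
def permWord {n : ℕ} (σ : Equiv.Perm (Fin n)) : FreeMonoid (Fin n) :=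
  FreeMonoid.ofList (List.ofFn fun i => σ i)

/-- The word `x_ε = x_1 x_2 ⋯ x_n`. -/
def epsWord (n : ℕ) : FreeMonoid (Fin n) :=
  FreeMonoid.ofList (List.ofFn fun i : Fin n => i)

/-- The defining relations `x_{σ(1)} ⋯ x_{σ(n)} = x_1 ⋯ x_n`, `σ ∈ Sym_n`. -/
def symRel (n : ℕ) : FreeMonoid (Fin n) → FreeMonoid (Fin n) → Prop :=
  fun a b => ∃ σ : Equiv.Perm (Fin n), a = permWord σ ∧ b = epsWord n

/-- The canonical projection from the free monoid onto `S_n(Sym_n)`. -/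
def proj (n : ℕ) : FreeMonoid (Fin n) →* PresentedMonoid (symRel n) :=
  PresentedMonoid.mk (symRel n)

/-- `u` contains a subword of the form `x_{σ(1)} ⋯ x_{σ(n)}` for some `σ ∈ Sym_n`. -/
def HasPermSubword {n : ℕ} (u : FreeMonoid (Fin n)) : Prop :=
  ∃ (σ : Equiv.Perm (Fin n)) (a b : FreeMonoid (Fin n)), u = a * permWord σ * b

/-- The word `x_1^{m_1} · x_ε · x_2^{m_2} ⋯ x_n^{m_n}` (0-indexed: `m i` is the
exponent of generator `i`). -/
def normalWord (n : ℕ) (h : 0 < n) (m : Fin n → ℕ) : FreeMonoid (Fin n) :=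
  FreeMonoid.ofList (List.replicate (m ⟨0, h⟩) ⟨0, h⟩) * epsWord n *
    FreeMonoid.ofList (((List.finRange n).drop 1).flatMap fun i => List.replicate (m i) i)

/-!
The defining relations only permute letters, so every map from the generators into a
commutative monoid extends to `S_n(Sym_n)`. Sending `x_i` to the `i`-th unit vector of
`ℕ^n` counts letters, and the word `x_1^{m_1} · x_ε · x_2^{m_2} ⋯ x_n^{m_n}` has letter
counts `m + 1`, which determines `m`.
-/

open FreeMonoid

theorem FreeMonoid.lift_ofList_flatMap_replicate {α M : Type*} [Monoid M] (f : α → M)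
    (m : α → ℕ) (l : List α) :
    lift f (ofList (l.flatMap fun i => List.replicate (m i) i)) =
      (l.map fun i => f i ^ m i).prod := by
  induction l with
  | nil => rfl
  | cons a l ih => simp [ofList_append, ih]

theorem prod_ofAdd_single_pow {ι : Type*} [Fintype ι] [DecidableEq ι] (k : ι → ℕ) :
    ∏ i, Multiplicative.ofAdd (Pi.single i 1 : ι → ℕ) ^ k i = Multiplicative.ofAdd k := by
  simp_rw [← ofAdd_nsmul, ← ofAdd_sum, ← Pi.single_smul', smul_eq_mul, mul_one,
    Finset.univ_sum_single]

section CommMonoid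

variable {n : ℕ} {M : Type*} [CommMonoid M]

theorem lift_permWord (f : Fin n → M) (σ : Equiv.Perm (Fin n)) :
    lift f (permWord σ) = ∏ i, f i := by
  rw [permWord, lift_ofList, List.map_ofFn, List.prod_ofFn]
  exact Equiv.prod_comp σ f

theorem lift_epsWord (f : Fin n → M) : lift f (epsWord n) = ∏ i, f i :=
  lift_permWord f 1

theorem lift_normalWord (h : 0 < n) (f : Fin n → M) (m : Fin n → ℕ) :
    lift f (normalWord n h m) = ∏ i, f i ^ (m i + 1) := by
  obtain ⟨k, rfl⟩ : ∃ k, n = k + 1 := ⟨n - 1, by omega⟩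
  rw [normalWord, map_mul, map_mul, lift_epsWord, lift_ofList_flatMap_replicate, lift_ofList,
    List.map_replicate, List.prod_replicate, List.finRange_succ, List.drop_succ_cons,
    List.drop_zero, List.map_map, ← Fin.prod_univ_def]
  simp only [pow_succ, Finset.prod_mul_distrib, Fin.prod_univ_succ (fun i => f i ^ m i)]
  exact mul_right_comm _ _ _

def liftToCommMonoid (f : Fin n → M) : PresentedMonoid (symRel n) →* M :=
  PresentedMonoid.lift f <| by
    rintro _ _ ⟨σ, rfl, rfl⟩
    rw [lift_permWord, lift_epsWord]

theorem liftToCommMonoid_proj (f : Fin n → M) (w : FreeMonoid (Fin n)) :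
    liftToCommMonoid f (proj n w) = lift f w :=
  rfl

end CommMonoid

/-- The map `(m_1, …, m_n) ↦ x_1^{m_1} · x_ε · x_2^{m_2} ⋯ x_n^{m_n}` from `ℕ^n` to
`S_n(Sym_n)` is injective. -/
theorem normalWord_injective (n : ℕ) (hn : 1 ≤ n) :
    Function.Injective (fun m : Fin n → ℕ => proj n (normalWord n hn m)) := by
  intro m m' h
  have hcount :=
    congrArg (liftToCommMonoid fun i => Multiplicative.ofAdd (Pi.single i 1 : Fin n → ℕ)) h
  simp only [liftToCommMonoid_proj, lift_normalWord, prod_ofAdd_single_pow] at hcount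
  funext i
  simpa using congrFun (Multiplicative.ofAdd.injective hcount) i
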